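/- arXiv:2405.14060 — 2 statements merged into one kernel-verified Lean document; each statement's English description precedes it below -/
import Mathlib

section
/- Backward rule for pairwise tensor contraction: if C = con(Λ, {A_{Va}, B_{Vb}}, Vc) with Λ = Va ∪ Vb ∪ Vc, and L is a scalar function of C with adjoint C̄ = ∂L/∂C, then the adjoints of the inputs are Ā = con(Λ, {C̄, B}, Va) and B̄ = con(Λ, {A, C̄}, Vb). -/
/-!
With nothing kept open, a contraction is a plain sum over all assignments `y` of the product
of the entries `T y`. Varying the single entry `A a` changes only the summands with
`y|Va = a`, each linearly, with slope the product of the remaining factors; so the derivative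
is the sum of those products over the assignments agreeing with `a` on `Va`, which is the
contraction of the remaining tensors onto `Va`.
-/

variable {ι : Type} [Fintype ι] [DecidableEq ι]
variable {D : ι → Type} [∀ i, Fintype (D i)] [∀ i, DecidableEq (D i)]

/-- Tensor network contraction `con(Λ, 𝒯, V₀)`. -/
noncomputable def con (𝒯 : List ((∀ i, D i) → ℝ)) (V₀ : Finset ι) (x : ∀ i, D i) : ℝ :=
  ∑ y : ∀ i, D i, if ∀ i ∈ V₀, y i = x i then (𝒯.map fun T => T y).prod else 0

/-- A tensor with scope `S`, given by a table of entries, as a function of full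
assignments. -/
def tensorOf (S : Finset ι) (t : (∀ j : {i // i ∈ S}, D j.1) → ℝ) : (∀ i, D i) → ℝ :=
  fun y => t fun j => y j.1

theorem con_empty (𝒯 : List ((∀ i, D i) → ℝ)) (x : ∀ i, D i) :
    con 𝒯 ∅ x = ∑ y, (𝒯.map fun T => T y).prod := by
  simp [con]

theorem con_perm {𝒯 𝒯' : List ((∀ i, D i) → ℝ)} (h : 𝒯.Perm 𝒯') (V₀ : Finset ι)
    (x : ∀ i, D i) : con 𝒯 V₀ x = con 𝒯' V₀ x := by
  simp only [con, (h.map _).prod_eq]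

theorem HasDerivAt.con_cons_empty {T : ℝ → (∀ i, D i) → ℝ} {T' : (∀ i, D i) → ℝ} {s₀ : ℝ}
    (hT : ∀ y, HasDerivAt (fun s => T s y) (T' y) s₀) (𝒯 : List ((∀ i, D i) → ℝ))
    (x : ∀ i, D i) :
    HasDerivAt (fun s => con (T s :: 𝒯) ∅ x) (∑ y, T' y * (𝒯.map fun T => T y).prod) s₀ := by
  simp only [con_empty, List.map_cons, List.prod_cons]
  exact HasDerivAt.fun_sum fun y _ => (hT y).mul_const _

theorem hasDerivAt_con_cons_tensorOf_update (S : Finset ι)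
    (t : (∀ j : {i // i ∈ S}, D j.1) → ℝ) (𝒯 : List ((∀ i, D i) → ℝ)) (x : ∀ i, D i) :
    HasDerivAt (fun s => con (tensorOf S (Function.update t (fun j => x j.1) s) :: 𝒯) ∅ x)
      (con 𝒯 S x) (t fun j => x j.1) := by
  have hentry (y : ∀ i, D i) := hasDerivAt_pi.mp
    (hasDerivAt_update t (fun j => x j.1) (t fun j => x j.1)) (fun j => y j.1)
  convert HasDerivAt.con_cons_empty (T := fun s => tensorOf S (Function.update t _ s)) hentry 𝒯 x
    using 1
  refine Finset.sum_congr rfl fun y _ => ?_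
  simp [Pi.single_apply, funext_iff]

theorem backward_rule_pairwise_contraction_general (Va Vb Vc : Finset ι)
    (A : (∀ j : {i // i ∈ Va}, D j.1) → ℝ) (B : (∀ j : {i // i ∈ Vb}, D j.1) → ℝ)
    (Cbar : (∀ j : {i // i ∈ Vc}, D j.1) → ℝ) (x : ∀ i, D i) :
    HasDerivAt
      (fun s : ℝ =>
        con [tensorOf Vc Cbar, tensorOf Va (Function.update A (fun j => x j.1) s),
          tensorOf Vb B] (∅ : Finset ι) x)
      (con [tensorOf Vc Cbar, tensorOf Vb B] Va x) (A fun j => x j.1) ∧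
    HasDerivAt
      (fun s : ℝ =>
        con [tensorOf Vc Cbar, tensorOf Va A,
          tensorOf Vb (Function.update B (fun j => x j.1) s)] (∅ : Finset ι) x)
      (con [tensorOf Va A, tensorOf Vc Cbar] Vb x) (B fun j => x j.1) := by
  constructor
  · convert hasDerivAt_con_cons_tensorOf_update Va A [tensorOf Vc Cbar, tensorOf Vb B] x
      using 2 with s
    exact con_perm (.swap _ _ _) _ _
  · convert hasDerivAt_con_cons_tensorOf_update Vb B [tensorOf Va A, tensorOf Vc Cbar] x
      using 2 with s
    exact con_perm (List.reverse_perm _).symm _ _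

/-- Backward rule for pairwise tensor contraction.  Note that
`con [tensorOf Vc C̄, tensorOf Va A, tensorOf Vb B] ∅ = Σ_c C̄(c)·C(c)` where
`C = con(Λ, {A, B}, Vc)`; differentiating in the entry `A(a)` (resp. `B(b)`) gives the
adjoint `Ā(a) = con(Λ, {C̄, B}, Va)(a)` (resp. `B̄(b) = con(Λ, {A, C̄}, Vb)(b)`). -/
theorem backward_rule_pairwise_contraction (Va Vb Vc : Finset ι)
    (hΛ : Va ∪ Vb ∪ Vc = (Finset.univ : Finset ι))
    (A : (∀ j : {i // i ∈ Va}, D j.1) → ℝ) (B : (∀ j : {i // i ∈ Vb}, D j.1) → ℝ)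
    (Cbar : (∀ j : {i // i ∈ Vc}, D j.1) → ℝ) (x : ∀ i, D i) :
    HasDerivAt
      (fun s : ℝ =>
        con [tensorOf Vc Cbar, tensorOf Va (Function.update A (fun j => x j.1) s),
          tensorOf Vb B] (∅ : Finset ι) x)
      (con [tensorOf Vc Cbar, tensorOf Vb B] Va x) (A fun j => x j.1) ∧
    HasDerivAt
      (fun s : ℝ =>
        con [tensorOf Vc Cbar, tensorOf Va A,
          tensorOf Vb (Function.update B (fun j => x j.1) s)] (∅ : Finset ι) x)
      (con [tensorOf Va A, tensorOf Vc Cbar] Vb x) (B fun j => x j.1) :=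
  backward_rule_pairwise_contraction_general Va Vb Vc A B Cbar x
end

section
/- Correctness of the backward sampling rule: let p(X,Y) be a probability distribution obtained as the normalized contraction of tensors A over X, B over Y, and R over Z ⊆ X ∪ Y (where all tensors are nonnegative), with C_Z = con(X∪Y, {A,B}, Z). Then for any assignment s_Z of Z with p(s_Z) > 0, the conditional distribution of the eliminated variables M = (X∪Y)∖Z given Z = s_Z satisfies p(M = m | Z = s_Z) = con(M, {A,B} sliced at Z = s_Z, M)(m) / C(s_Z). -/
/-!
A full assignment `x` encodes both `m` (its M-coordinates) and `s_Z` (its Z-coordinates), so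
`p(m, s_Z) = A x * B x * R x / W` and `con(M, {A,B}_{Z=s_Z}, M)(m) = A x * B x`.

Since `R` only reads the Z-coordinates, it is constant on the summands of the Z-marginal and
factors out of it: `con [A, B, R] Z x = C(s_Z) * R(s_Z)`. In the quotient `p(m, s_Z) / p(s_Z)`
the normalization `W` and the factor `R(s_Z)` then cancel; `p(s_Z) > 0` makes both nonzero.
-/

variable {ι : Type} [Fintype ι] [DecidableEq ι]
variable {D : ι → Type} [∀ i, Fintype (D i)] [∀ i, DecidableEq (D i)]

/-- A tensor `T` has scope (at most) `S` if it depends only on the coordinates in `S`. -/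
def TensorDependsOn (T : (∀ i, D i) → ℝ) (S : Finset ι) : Prop :=
  ∀ x y : ∀ i, D i, (∀ i ∈ S, x i = y i) → T x = T y

theorem con_append_singleton_of_dependsOn {T : (∀ i, D i) → ℝ} {V₀ : Finset ι}
    (hT : TensorDependsOn T V₀) (𝒯 : List ((∀ i, D i) → ℝ)) (x : ∀ i, D i) :
    con (𝒯 ++ [T]) V₀ x = con 𝒯 V₀ x * T x := by
  unfold con
  rw [Finset.sum_mul]
  refine Finset.sum_congr rfl fun y _ => ?_
  split_ifs with hy
  · simp [hT y x hy]
  · rw [zero_mul]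

theorem backward_sampling_rule_general (Z : Finset ι)
    (A B R : (∀ i, D i) → ℝ)
    (hR : TensorDependsOn R Z)
    (W : ℝ)
    (x : ∀ i, D i)
    -- p(s_Z) > 0, where p(Z) is the marginal of p on Z and s_Z = x restricted to Z
    (hsZ : 0 < con [A, B, R] Z x / W) :
    -- p(m | s_Z) = p(m, s_Z) / p(s_Z) = (A x * B x) / C(s_Z)
    (A x * B x * R x / W) / (con [A, B, R] Z x / W) =
      (A x * B x) / con [A, B] Z x := by
  have hfactor : con [A, B, R] Z x = con [A, B] Z x * R x :=
    con_append_singleton_of_dependsOn hR [A, B] x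
  rw [hfactor] at hsZ ⊢
  obtain ⟨hCR, hW⟩ := div_ne_zero_iff.mp hsZ.ne'
  obtain ⟨-, hRx⟩ := mul_ne_zero_iff.mp hCR
  rw [div_div_div_cancel_right₀ hW, mul_div_mul_right _ _ hRx]

/-- Correctness of the backward sampling rule:
`p(M = m | Z = s_Z) = con(M, {A,B}_{Z=s_Z}, M)(m) / C(s_Z)`. -/
theorem backward_sampling_rule (X Y Z : Finset ι)
    (hXY : X ∪ Y = (Finset.univ : Finset ι)) (hZ : Z ⊆ X ∪ Y)
    (A B R : (∀ i, D i) → ℝ)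
    (hA : TensorDependsOn A X) (hB : TensorDependsOn B Y) (hR : TensorDependsOn R Z)
    (hAnn : ∀ y, 0 ≤ A y) (hBnn : ∀ y, 0 ≤ B y) (hRnn : ∀ y, 0 ≤ R y)
    (W : ℝ) (hW : W = ∑ y : ∀ i, D i, A y * B y * R y) (hWpos : 0 < W)
    (x : ∀ i, D i)
    -- p(s_Z) > 0, where p(Z) is the marginal of p on Z and s_Z = x restricted to Z
    (hsZ : 0 < con [A, B, R] Z x / W) :
    -- p(m | s_Z) = p(m, s_Z) / p(s_Z) = (A x * B x) / C(s_Z)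
    (A x * B x * R x / W) / (con [A, B, R] Z x / W) =
      (A x * B x) / con [A, B] Z x :=
  backward_sampling_rule_general Z A B R hR W x hsZ
end
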